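/- arXiv:2410.10516 — 2 statements merged into one kernel-verified Lean document; each statement's English description precedes it below -/
import Mathlib

section
/- Let X₀ be a random vector on ℝ^d with density q₀ having finite second moment, let ε ~ N(0, I_d) be independent of X₀, and set X_t = α X₀ + σ ε for constants α > 0 and σ > 0, with q_t the density of X_t. Then for every measurable φ : ℝ^d → ℝ^d with E‖φ(X_t)‖² < ∞, the exact identity E‖ φ(X_t) + σ ∇ log q_t(X_t) ‖² = (α²/σ²) · E‖ E[X₀ | X_t] − (X_t − σ φ(X_t))/α ‖² holds; i.e. the score-estimation loss equals a scaled L² distance between the true posterior mean of X₀ given X_t and the network-induced posterior mean (X_t − σ φ(X_t))/α. -/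
open MeasureTheory

/-- The Gaussian transition density `N(x | α x₀, σ² I_d)` of the noising model
`X_t = α X₀ + σ ε`, as a function of `x₀` and `x`. -/
noncomputable def gaussKernel (d : ℕ) (α σ : ℝ)
    (x0 x : EuclideanSpace ℝ (Fin d)) : ℝ :=
  (2 * Real.pi * σ ^ 2) ^ (-(d : ℝ) / 2) * Real.exp (-‖x - α • x0‖ ^ 2 / (2 * σ ^ 2))

section Aux

variable {d : ℕ}

lemma gaussKernel_eq (d : ℕ) (α σ : ℝ) (x0 x : EuclideanSpace ℝ (Fin d)) :
    gaussKernel d α σ x0 x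
      = (2 * Real.pi * σ ^ 2) ^ (-(d : ℝ) / 2)
          * Real.exp ((-(2 * σ ^ 2)⁻¹) * ‖x - α • x0‖ ^ 2) := by
  unfold gaussKernel
  congr 2
  ring

lemma gaussKernel_pos {α σ : ℝ} (hσ : 0 < σ) (x0 x : EuclideanSpace ℝ (Fin d)) :
    0 < gaussKernel d α σ x0 x := by
  have : (0:ℝ) < 2 * Real.pi * σ ^ 2 := by positivity
  exact mul_pos (Real.rpow_pos_of_pos this _) (Real.exp_pos _)

lemma gaussKernel_le {α σ : ℝ} (hσ : 0 < σ) (x0 x : EuclideanSpace ℝ (Fin d)) :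
    gaussKernel d α σ x0 x ≤ (2 * Real.pi * σ ^ 2) ^ (-(d : ℝ) / 2) := by
  have hb : (0:ℝ) < 2 * Real.pi * σ ^ 2 := by positivity
  have h1 : Real.exp (-‖x - α • x0‖ ^ 2 / (2 * σ ^ 2)) ≤ 1 := by
    calc Real.exp (-‖x - α • x0‖ ^ 2 / (2 * σ ^ 2)) ≤ Real.exp 0 := by
          apply Real.exp_le_exp.mpr
          apply div_nonpos_of_nonpos_of_nonneg
          · simpa using sq_nonneg ‖x - α • x0‖
          · positivity
      _ = 1 := Real.exp_zero
  have := Real.rpow_pos_of_pos hb (-(d:ℝ)/2)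
  calc gaussKernel d α σ x0 x
      ≤ (2 * Real.pi * σ ^ 2) ^ (-(d : ℝ) / 2) * 1 :=
        mul_le_mul_of_nonneg_left h1 this.le
    _ = _ := mul_one _

/-- `r · exp(−r²/(2σ²)) ≤ 2σ`. -/
lemma mul_exp_sq_le {σ : ℝ} (hσ : 0 < σ) {r : ℝ} (hr : 0 ≤ r) :
    r * Real.exp (-r ^ 2 / (2 * σ ^ 2)) ≤ 2 * σ := by
  rcases le_total r σ with h | h
  · have h1 : Real.exp (-r ^ 2 / (2 * σ ^ 2)) ≤ 1 := by
      calc Real.exp (-r ^ 2 / (2 * σ ^ 2)) ≤ Real.exp 0 := by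
            apply Real.exp_le_exp.mpr
            apply div_nonpos_of_nonpos_of_nonneg
            · simpa using sq_nonneg r
            · positivity
        _ = 1 := Real.exp_zero
    nlinarith [Real.exp_pos (-r ^ 2 / (2 * σ ^ 2))]
  · have hrpos : 0 < r := lt_of_lt_of_le hσ h
    set u : ℝ := r ^ 2 / (2 * σ ^ 2) with hu
    have hupos : 0 < u := by positivity
    have hexp : u ≤ Real.exp u := by linarith [Real.add_one_le_exp u]
    have hE : 0 < Real.exp u := Real.exp_pos u
    have h3 : -r ^ 2 / (2 * σ ^ 2) = -u := by rw [hu]; ring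
    rw [h3, Real.exp_neg]
    rw [mul_inv_le_iff₀ hE]
    -- goal : r ≤ 2 * σ * Real.exp u
    have h4 : r ^ 2 ≤ Real.exp u * (2 * σ ^ 2) := by
      rw [hu] at hexp
      exact (div_le_iff₀ (by positivity)).mp hexp
    nlinarith [mul_le_mul_of_nonneg_left h4 (le_of_lt hσ), sq_nonneg (r - σ)]

lemma continuous_gaussKernel_left (d : ℕ) (α σ : ℝ) (x : EuclideanSpace ℝ (Fin d)) :
    Continuous (fun x0 => gaussKernel d α σ x0 x) := by
  unfold gaussKernel
  fun_prop

/-- Fréchet derivative of the Gaussian kernel in the `x` variable. -/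
lemma gaussKernel_hasFDerivAt {α σ : ℝ} (hσ : 0 < σ) (x0 x : EuclideanSpace ℝ (Fin d)) :
    HasFDerivAt (fun y => gaussKernel d α σ x0 y)
      ((-(σ ^ 2)⁻¹ * gaussKernel d α σ x0 x) • innerSL ℝ (x - α • x0)) x := by
  have hfun : (fun y => gaussKernel d α σ x0 y)
      = fun y : EuclideanSpace ℝ (Fin d) =>
          (2 * Real.pi * σ ^ 2) ^ (-(d : ℝ) / 2)
            * Real.exp ((-(2 * σ ^ 2)⁻¹) * ‖y - α • x0‖ ^ 2) :=
    funext fun y => gaussKernel_eq d α σ x0 y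
  have h1 : HasFDerivAt (fun y : EuclideanSpace ℝ (Fin d) => ‖y - α • x0‖ ^ 2)
      (2 • ((innerSL ℝ (x - α • x0)).comp (ContinuousLinearMap.id ℝ _))) x := by
    simpa using ((hasFDerivAt_id x).sub_const (α • x0)).norm_sq
  have h2 := h1.const_mul (-(2 * σ ^ 2)⁻¹ : ℝ)
  have h3 := h2.exp
  have h4 := h3.const_mul ((2 * Real.pi * σ ^ 2) ^ (-(d : ℝ) / 2) : ℝ)
  rw [hfun]
  refine h4.congr_fderiv ?_
  ext y
  have hσ2 : (σ:ℝ) ^ 2 ≠ 0 := by positivity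
  rw [gaussKernel_eq]
  simp only [ContinuousLinearMap.smul_apply, ContinuousLinearMap.coe_comp',
    Function.comp_apply, ContinuousLinearMap.coe_id', id_eq, innerSL_apply_apply,
    smul_eq_mul, nsmul_eq_mul, Nat.cast_ofNat]
  field_simp

end Aux

set_option maxHeartbeats 2000000
set_option synthInstance.maxHeartbeats 1000000

/-- Let `X₀` have density `q₀` on `ℝ^d` with finite second moment, `ε ~ N(0, I_d)` independent
of `X₀`, and `X_t = α X₀ + σ ε` with `α, σ > 0` and `q_t` the density of `X_t`.  Then for
every measurable `φ : ℝ^d → ℝ^d` with `E‖φ(X_t)‖² < ∞`,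

`E‖ φ(X_t) + σ ∇ log q_t(X_t) ‖² = (α²/σ²) · E‖ E[X₀ | X_t] − (X_t − σ φ(X_t))/α ‖²`,

where `E[X₀ | X_t = x] = ∫ x₀ · ( N(x | α x₀, σ² I_d) q₀(x₀) / q_t(x) ) dx₀` is the
posterior mean; i.e. the score-estimation loss equals a scaled `L²` distance between the
true posterior mean of `X₀` given `X_t` and the network-induced posterior mean
`(X_t − σ φ(X_t))/α`. -/
theorem score_loss_eq_scaled_posterior_mean_distance
    {d : ℕ} (α σ : ℝ) (hα : 0 < α) (hσ : 0 < σ)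
    (q0 : EuclideanSpace ℝ (Fin d) → ℝ)
    (hq0meas : Measurable q0)
    (hq0pos : ∀ x, 0 < q0 x)
    (hq0prob : ∫ x, q0 x = 1)
    -- finite second moment:
    (hq0mom : Integrable (fun x => ‖x‖ ^ 2 * q0 x))
    (qt : EuclideanSpace ℝ (Fin d) → ℝ)
    (hqt : ∀ x, qt x = ∫ x0, gaussKernel d α σ x0 x * q0 x0)
    (φ : EuclideanSpace ℝ (Fin d) → EuclideanSpace ℝ (Fin d))
    (hφmeas : Measurable φ)
    -- E‖φ(X_t)‖² < ∞:
    (hφsq : Integrable (fun x => qt x * ‖φ x‖ ^ 2)) :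
    (∫ x, qt x * ‖φ x + σ • gradient (fun y => Real.log (qt y)) x‖ ^ 2)
      = (α ^ 2 / σ ^ 2) *
        ∫ x, qt x *
          ‖(∫ x0, (gaussKernel d α σ x0 x * q0 x0 / qt x) • x0)
            - α⁻¹ • (x - σ • φ x)‖ ^ 2 := by
  classical
  set c : ℝ := (2 * Real.pi * σ ^ 2) ^ (-(d : ℝ) / 2) with hc
  have hcpos : 0 < c := Real.rpow_pos_of_pos (by positivity) _
  have hσ2 : (0:ℝ) < σ ^ 2 := by positivity
  -- q0 is integrable
  have hq0int : Integrable q0 := by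
    by_contra h
    rw [integral_undef h] at hq0prob
    norm_num at hq0prob
  -- ‖x‖ * q0 x is integrable
  have hq0norm : Integrable (fun a => ‖a‖ * q0 a) := by
    refine (hq0int.add hq0mom).mono' ?_ ?_
    · exact (measurable_norm.mul hq0meas).aestronglyMeasurable
    · refine Filter.Eventually.of_forall fun a => ?_
      have h1 : ‖a‖ ≤ 1 + ‖a‖ ^ 2 := by nlinarith [sq_nonneg (‖a‖ - 1)]
      have h2 : 0 ≤ ‖a‖ * q0 a := mul_nonneg (norm_nonneg _) (hq0pos a).le
      rw [Real.norm_of_nonneg h2]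
      have := (hq0pos a).le
      show ‖a‖ * q0 a ≤ q0 a + ‖a‖ ^ 2 * q0 a
      nlinarith
  have hKmeas : ∀ y : EuclideanSpace ℝ (Fin d),
      Measurable (fun a => gaussKernel d α σ a y) :=
    fun y => (continuous_gaussKernel_left d α σ y).measurable
  -- integrability of the kernel against q0
  have hK1 : ∀ y, Integrable (fun a => gaussKernel d α σ a y * q0 a) := by
    intro y
    refine (hq0int.const_mul c).mono' ?_ ?_
    · exact ((hKmeas y).mul hq0meas).aestronglyMeasurable
    · refine Filter.Eventually.of_forall fun a => ?_
      have h0 : 0 ≤ gaussKernel d α σ a y * q0 a :=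
        mul_nonneg (gaussKernel_pos hσ a y).le (hq0pos a).le
      rw [Real.norm_of_nonneg h0]
      exact mul_le_mul_of_nonneg_right (gaussKernel_le hσ a y) (hq0pos a).le
  -- integrability of vector-valued kernel moments
  have hKx0 : ∀ y, Integrable (fun a => (gaussKernel d α σ a y * q0 a) • a) := by
    intro y
    refine (hq0norm.const_mul c).mono' ?_ ?_
    · exact (((hKmeas y).mul hq0meas).aestronglyMeasurable.smul
        aestronglyMeasurable_id)
    · refine Filter.Eventually.of_forall fun a => ?_
      have h0 : 0 ≤ gaussKernel d α σ a y * q0 a :=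
        mul_nonneg (gaussKernel_pos hσ a y).le (hq0pos a).le
      rw [norm_smul, Real.norm_of_nonneg h0]
      calc gaussKernel d α σ a y * q0 a * ‖a‖
          ≤ c * q0 a * ‖a‖ := by
            apply mul_le_mul_of_nonneg_right _ (norm_nonneg a)
            exact mul_le_mul_of_nonneg_right (gaussKernel_le hσ a y) (hq0pos a).le
        _ = c * (‖a‖ * q0 a) := by ring
  -- positivity of qt
  have hqtpos : ∀ y, 0 < qt y := by
    intro y
    rw [hqt y]
    have h := (integral_pos_iff_support_of_nonneg
      (fun a => (mul_nonneg (gaussKernel_pos hσ a y).le (hq0pos a).le :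
        0 ≤ gaussKernel d α σ a y * q0 a)) (hK1 y)).mpr
    apply h
    have hsupp : (Function.support fun a => gaussKernel d α σ a y * q0 a) = Set.univ := by
      ext a
      simp only [Function.mem_support, Set.mem_univ, iff_true]
      exact (mul_pos (gaussKernel_pos hσ a y) (hq0pos a)).ne'
    rw [hsupp]
    simpa using (isOpen_univ.measure_pos (volume : Measure (EuclideanSpace ℝ (Fin d)))
      Set.univ_nonempty)
  -- the key pointwise identity
  have key : ∀ x : EuclideanSpace ℝ (Fin d),
      φ x + σ • gradient (fun y => Real.log (qt y)) x
        = (α / σ) • ((∫ x0, (gaussKernel d α σ x0 x * q0 x0 / qt x) • x0)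
            - α⁻¹ • (x - σ • φ x)) := by
    intro x
    -- derivative of qt under the integral sign
    set F' : EuclideanSpace ℝ (Fin d) → EuclideanSpace ℝ (Fin d) →
        (EuclideanSpace ℝ (Fin d) →L[ℝ] ℝ) :=
      fun y a => (-(σ ^ 2)⁻¹ * gaussKernel d α σ a y * q0 a) • innerSL ℝ (y - α • a)
      with hF'
    have hF'norm : ∀ y a, ‖F' y a‖
        = (σ ^ 2)⁻¹ * (gaussKernel d α σ a y * q0 a) * ‖y - α • a‖ := by
      intro y a
      simp only [hF']
      rw [norm_smul (-(σ ^ 2)⁻¹ * gaussKernel d α σ a y * q0 a)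
        (innerSL ℝ (y - α • a)), innerSL_apply_norm]
      have h0 : 0 ≤ gaussKernel d α σ a y * q0 a :=
        mul_nonneg (gaussKernel_pos hσ a y).le (hq0pos a).le
      rw [Real.norm_eq_abs, abs_mul, abs_mul]
      rw [abs_of_nonneg (hq0pos a).le, abs_of_nonneg (gaussKernel_pos hσ a y).le]
      rw [abs_neg, abs_of_nonneg (inv_nonneg.mpr hσ2.le)]
      ring
    have hF'bound : ∀ y a, ‖F' y a‖ ≤ (2 * c / σ) * q0 a := by
      intro y a
      rw [hF'norm y a, gaussKernel_eq]
      have hr : (0:ℝ) ≤ ‖y - α • a‖ := norm_nonneg _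
      have hkey := mul_exp_sq_le hσ hr
      have hq := (hq0pos a).le
      calc (σ ^ 2)⁻¹ * (c * Real.exp (-(2 * σ ^ 2)⁻¹ * ‖y - α • a‖ ^ 2) * q0 a)
            * ‖y - α • a‖
          = (σ ^ 2)⁻¹ * c * q0 a
              * (‖y - α • a‖ * Real.exp (-‖y - α • a‖ ^ 2 / (2 * σ ^ 2))) := by
            rw [show -(2 * σ ^ 2)⁻¹ * ‖y - α • a‖ ^ 2
                = -‖y - α • a‖ ^ 2 / (2 * σ ^ 2) by field_simp]
            ring
        _ ≤ (σ ^ 2)⁻¹ * c * q0 a * (2 * σ) := by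
            apply mul_le_mul_of_nonneg_left hkey
            positivity
        _ = (2 * c / σ) * q0 a := by field_simp
    have hF'int : Integrable (F' x) := by
      refine ((hq0int.const_mul (2 * c / σ)).mono' ?_ ?_)
      · apply AEStronglyMeasurable.fun_smul
        · exact ((((hKmeas x).const_mul _).mul hq0meas)).aestronglyMeasurable
        · apply Continuous.aestronglyMeasurable
          exact (innerSL ℝ).continuous.comp
            (continuous_const.sub (continuous_id.const_smul α))
      · exact Filter.Eventually.of_forall fun a => hF'bound x a
    have hDqt : HasFDerivAt qt (∫ a, F' x a) x := by
      have heq : qt = fun y => ∫ a, gaussKernel d α σ a y * q0 a := funext hqt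
      rw [heq]
      apply hasFDerivAt_integral_of_dominated_of_fderiv_le
        (hs := Filter.univ_mem)
        (bound := fun a => (2 * c / σ) * q0 a)
      · exact Filter.Eventually.of_forall fun y =>
          ((hKmeas y).mul hq0meas).aestronglyMeasurable
      · exact hK1 x
      · exact hF'int.aestronglyMeasurable
      · exact Filter.Eventually.of_forall fun a y _ => hF'bound y a
      · exact hq0int.const_mul _
      · refine Filter.Eventually.of_forall fun a y _ => ?_
        have h : HasFDerivAt (fun z => gaussKernel d α σ a z * q0 a)
            (q0 a • ((-(σ ^ 2)⁻¹ * gaussKernel d α σ a y) • innerSL ℝ (y - α • a))) y :=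
          (gaussKernel_hasFDerivAt hσ a y).mul_const (q0 a)
        refine h.congr_fderiv ?_
        simp only [hF', smul_smul]
        congr 1
        ring
    -- the gradient of qt as a vector-valued integral
    set G : EuclideanSpace ℝ (Fin d) :=
      ∫ a, (-(σ ^ 2)⁻¹ * gaussKernel d α σ a x * q0 a) • (x - α • a) with hG
    have hGint : Integrable
        (fun a => (-(σ ^ 2)⁻¹ * gaussKernel d α σ a x * q0 a) • (x - α • a)) := by
      refine (((hq0int.const_mul ((σ ^ 2)⁻¹ * c * ‖x‖)).add
        ((hq0norm.const_mul ((σ ^ 2)⁻¹ * c * α)))).mono' ?_ ?_)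
      · apply AEStronglyMeasurable.fun_smul
        · exact (((hKmeas x).const_mul _).mul hq0meas).aestronglyMeasurable
        · exact (continuous_const.sub (continuous_id.const_smul α)).aestronglyMeasurable
      · refine Filter.Eventually.of_forall fun a => ?_
        have h0 : 0 ≤ gaussKernel d α σ a x * q0 a :=
          mul_nonneg (gaussKernel_pos hσ a x).le (hq0pos a).le
        rw [norm_smul]
        have habs : ‖(-(σ ^ 2)⁻¹ * gaussKernel d α σ a x * q0 a : ℝ)‖
            = (σ ^ 2)⁻¹ * (gaussKernel d α σ a x * q0 a) := by
          rw [Real.norm_eq_abs, abs_mul, abs_mul, abs_of_nonneg (hq0pos a).le,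
            abs_of_nonneg (gaussKernel_pos hσ a x).le, abs_neg,
            abs_of_nonneg (inv_nonneg.mpr hσ2.le)]
          ring
        rw [habs]
        have htri : ‖x - α • a‖ ≤ ‖x‖ + α * ‖a‖ := by
          calc ‖x - α • a‖ ≤ ‖x‖ + ‖α • a‖ := norm_sub_le _ _
            _ = ‖x‖ + α * ‖a‖ := by rw [norm_smul, Real.norm_of_nonneg hα.le]
        have hKle : gaussKernel d α σ a x ≤ c := gaussKernel_le hσ a x
        have hq := (hq0pos a).le
        calc (σ ^ 2)⁻¹ * (gaussKernel d α σ a x * q0 a) * ‖x - α • a‖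
            ≤ (σ ^ 2)⁻¹ * (c * q0 a) * (‖x‖ + α * ‖a‖) := by
              apply mul_le_mul
              · apply mul_le_mul_of_nonneg_left _ (inv_nonneg.mpr hσ2.le)
                exact mul_le_mul_of_nonneg_right hKle hq
              · exact htri
              · exact norm_nonneg _
              · positivity
          _ = (σ ^ 2)⁻¹ * c * ‖x‖ * q0 a + (σ ^ 2)⁻¹ * c * α * (‖a‖ * q0 a) := by ring
    have hgradqt : HasGradientAt qt G x := by
      rw [hasGradientAt_iff_hasFDerivAt]
      have hDG : (InnerProductSpace.toDual ℝ (EuclideanSpace ℝ (Fin d))) G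
          = ∫ a, F' x a := by
        ext y
        rw [ContinuousLinearMap.integral_apply hF'int]
        rw [InnerProductSpace.toDual_apply_apply]
        rw [hG, real_inner_comm, ← integral_inner hGint y]
        congr 1
        funext a
        rw [hF']
        simp only [ContinuousLinearMap.smul_apply, innerSL_apply_apply, smul_eq_mul]
        rw [real_inner_smul_right, real_inner_comm]
      rw [hDG]
      exact hDqt
    have hlog : HasGradientAt (fun y => Real.log (qt y)) ((qt x)⁻¹ • G) x := by
      rw [hasGradientAt_iff_hasFDerivAt]
      have h2 := (Real.hasDerivAt_log (hqtpos x).ne').comp_hasFDerivAt x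
        hgradqt.hasFDerivAt
      have h3 : (InnerProductSpace.toDual ℝ (EuclideanSpace ℝ (Fin d)))
          ((qt x)⁻¹ • G)
          = (qt x)⁻¹ • (InnerProductSpace.toDual ℝ (EuclideanSpace ℝ (Fin d))) G := by
        simp
      rw [h3]
      exact h2
    have hgval : gradient (fun y => Real.log (qt y)) x = (qt x)⁻¹ • G := hlog.gradient
    -- compute G in terms of the posterior moment I0
    set I0 : EuclideanSpace ℝ (Fin d) := ∫ a, (gaussKernel d α σ a x * q0 a) • a with hI0
    have hGval : G = (-(σ ^ 2)⁻¹) • ((qt x) • x - α • I0) := by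
      rw [hG]
      have hintegrand : (fun a => (-(σ ^ 2)⁻¹ * gaussKernel d α σ a x * q0 a) • (x - α • a))
          = fun a => (-(σ ^ 2)⁻¹ : ℝ) • ((gaussKernel d α σ a x * q0 a) • x
              - α • ((gaussKernel d α σ a x * q0 a) • a)) := by
        funext a
        match_scalars <;> ring
      have h2int : Integrable (fun a => α • ((gaussKernel d α σ a x * q0 a) • a)) :=
        (hKx0 x).smul α
      rw [hintegrand, integral_smul]
      congr 1
      rw [integral_sub ((hK1 x).smul_const x) h2int]
      rw [integral_smul_const, integral_smul, ← hqt x]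
    have hmval : (∫ x0, (gaussKernel d α σ x0 x * q0 x0 / qt x) • x0)
        = (qt x)⁻¹ • I0 := by
      have : (fun x0 => (gaussKernel d α σ x0 x * q0 x0 / qt x) • x0)
          = fun x0 => (qt x)⁻¹ • ((gaussKernel d α σ x0 x * q0 x0) • x0) := by
        funext x0
        rw [smul_smul, div_eq_mul_inv]
        ring_nf
      rw [this, integral_smul, hI0]
    rw [hgval, hGval, hmval]
    have hqtne : qt x ≠ 0 := (hqtpos x).ne'
    have hσne : σ ≠ 0 := hσ.ne'
    have hαne : α ≠ 0 := hα.ne'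
    match_scalars <;> field_simp <;> ring
  -- conclude: pointwise equality of integrands up to the constant α²/σ²
  have hptwise : ∀ x : EuclideanSpace ℝ (Fin d),
      qt x * ‖φ x + σ • gradient (fun y => Real.log (qt y)) x‖ ^ 2
        = (α ^ 2 / σ ^ 2) * (qt x *
            ‖(∫ x0, (gaussKernel d α σ x0 x * q0 x0 / qt x) • x0)
              - α⁻¹ • (x - σ • φ x)‖ ^ 2) := by
    intro x
    rw [key x, norm_smul, Real.norm_eq_abs, abs_of_pos (div_pos hα hσ)]
    rw [mul_pow, div_pow]
    ring
  calc (∫ x, qt x * ‖φ x + σ • gradient (fun y => Real.log (qt y)) x‖ ^ 2)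
      = ∫ x, (α ^ 2 / σ ^ 2) * (qt x *
          ‖(∫ x0, (gaussKernel d α σ x0 x * q0 x0 / qt x) • x0)
            - α⁻¹ • (x - σ • φ x)‖ ^ 2) := by
        exact integral_congr_ae (Filter.Eventually.of_forall hptwise)
    _ = _ := integral_const_mul _ _
end

section
/- Let X₀ be a random vector on ℝ^d with density q₀ having finite second moment, let ε ~ N(0, I_d) be independent of X₀, and set X_t = α X₀ + σ ε for constants α > 0 and σ > 0, with q_t the density of X_t. Let g : ℝ^d → ℝ^m be measurable and let φ : ℝ^d → ℝ^d be measurable with E‖φ(X_t)‖² < ∞. Suppose the conditional density of X₀ given X_t = x is modeled as q(· | x) = N( E[X₀ | X_t = x], s² I_d ) and the network's conditional is p(· | g(x)) = N( (x − σ φ(x))/α, s² I_d ) for some fixed s > 0. Then E_{X_t}[ D_KL( q(· | X_t) ‖ p(· | g(X_t)) ) ] = (1/(2s²)) · E‖ E[X₀ | X_t] − (X_t − σ φ(X_t))/α ‖² = ( σ² / (2 s² α²) ) · E‖ φ(X_t) + σ ∇ log q_t(X_t) ‖²; i.e. under Gaussian posteriors with shared isotropic variance, minimizing the expected KL divergence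 is equivalent to minimizing the score-estimation (denoising diffusion) loss up to the constant factor σ²/(2 s² α²). -/
open MeasureTheory

/-- The isotropic Gaussian density `N(x₀ | μ, s² I_d)` on `ℝ^d`. -/
noncomputable def isoGauss (d : ℕ) (s : ℝ)
    (x0 μ : EuclideanSpace ℝ (Fin d)) : ℝ :=
  (2 * Real.pi * s ^ 2) ^ (-(d : ℝ) / 2) * Real.exp (-‖x0 - μ‖ ^ 2 / (2 * s ^ 2))

/-- The posterior mean `E[X₀ | X_t = x]` of the Gaussian noising model,
`∫ x₀ · ( N(x | α x₀, σ² I_d) q₀(x₀) / q_t(x) ) dx₀`. -/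
noncomputable def postMean (d : ℕ) (α σ : ℝ)
    (q0 qt : EuclideanSpace ℝ (Fin d) → ℝ) (x : EuclideanSpace ℝ (Fin d)) :
    EuclideanSpace ℝ (Fin d) :=
  ∫ x0, (gaussKernel d α σ x0 x * q0 x0 / qt x) • x0

section Aux
open Real
variable {E : Type*} [NormedAddCommGroup E] [InnerProductSpace ℝ E]
    [FiniteDimensional ℝ E] [MeasurableSpace E] [BorelSpace E]

lemma integrable_gauss' {b : ℝ} (hb : 0 < b) : Integrable (fun y : E => rexp (-b * ‖y‖^2)) := by
  have h : Integrable (fun v : E => Complex.exp (-(b:ℂ) * ‖v‖^2 + 0 * ((inner ℝ (0:E) v : ℝ) : ℂ))) :=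
    GaussianFourier.integrable_cexp_neg_mul_sq_norm_add (by simpa using hb) 0 0
  refine h.norm.congr ?_
  filter_upwards with y
  rw [Complex.norm_exp]
  congr 1
  push_cast
  simp
  exact Or.inl (by norm_cast)

lemma ue_le_one {u : ℝ} (hu : 0 ≤ u) : u * rexp (-u) ≤ 1 := by
  calc u * rexp (-u) ≤ rexp u * rexp (-u) :=
        mul_le_mul_of_nonneg_right (by linarith [add_one_le_exp u]) (exp_pos _).le
    _ = 1 := by rw [← exp_add]; simp

lemma sq_mul_gauss_le' {b t : ℝ} (hb : 0 < b) :
    t^2 * rexp (-b * t^2) ≤ b⁻¹ := by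
  have h := ue_le_one (u := b * t^2) (by positivity)
  calc t^2 * rexp (-b * t^2) = b⁻¹ * (b * t^2 * rexp (-(b * t^2))) := by
        rw [neg_mul]; field_simp
    _ ≤ b⁻¹ * 1 := mul_le_mul_of_nonneg_left h (by positivity)
    _ = b⁻¹ := mul_one _

lemma sq_mul_gauss_le {b t : ℝ} (hb : 0 < b) :
    t^2 * rexp (-b * t^2) ≤ b⁻¹ * 2 * rexp (-(b/2) * t^2) := by
  have h1 : rexp (-b * t^2) = rexp (-(b/2) * t^2) * rexp (-(b/2) * t^2) := by
    rw [← exp_add]; ring_nf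
  have h3 : t^2 * rexp (-(b/2) * t^2) ≤ b⁻¹ * 2 := by
    have := sq_mul_gauss_le' (t := t) (show (0:ℝ) < b/2 by linarith)
    calc t^2 * rexp (-(b/2) * t^2) ≤ (b/2)⁻¹ := this
      _ = b⁻¹ * 2 := by field_simp
  calc t^2 * rexp (-b * t^2) = (t^2 * rexp (-(b/2) * t^2)) * rexp (-(b/2) * t^2) := by
        rw [h1]; ring
    _ ≤ (b⁻¹ * 2) * rexp (-(b/2) * t^2) :=
        mul_le_mul_of_nonneg_right h3 (exp_pos _).le

lemma integrable_normsq_gauss {b : ℝ} (hb : 0 < b) :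
    Integrable (fun y : E => ‖y‖^2 * rexp (-b * ‖y‖^2)) := by
  refine Integrable.mono' ((integrable_gauss' (E := E) (b := b/2) (by linarith)).const_mul (b⁻¹*2)) ?_ ?_
  · exact (Continuous.mul (by fun_prop) (by fun_prop)).aestronglyMeasurable
  · filter_upwards with y
    rw [Real.norm_of_nonneg (by positivity)]
    exact sq_mul_gauss_le hb

lemma integrable_norm_gauss {b : ℝ} (hb : 0 < b) :
    Integrable (fun y : E => ‖y‖ * rexp (-b * ‖y‖^2)) := by
  refine Integrable.mono' ((integrable_gauss' (E := E) hb).add (integrable_normsq_gauss hb)) ?_ ?_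
  · exact (Continuous.mul (by fun_prop) (by fun_prop)).aestronglyMeasurable
  · filter_upwards with y
    rw [Real.norm_of_nonneg (by positivity)]
    have h : ‖y‖ ≤ 1 + ‖y‖^2 := by nlinarith [norm_nonneg y, sq_nonneg (‖y‖ - 1)]
    calc ‖y‖ * rexp (-b * ‖y‖^2) ≤ (1 + ‖y‖^2) * rexp (-b*‖y‖^2) :=
          mul_le_mul_of_nonneg_right h (exp_pos _).le
      _ = rexp (-b*‖y‖^2) + ‖y‖^2 * rexp (-b*‖y‖^2) := by ring

lemma gauss_mul_norm_le {c t : ℝ} (hc : 0 < c) (ht : 0 ≤ t) :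
    rexp (-c * t^2) * t ≤ 1 + c⁻¹ := by
  have h2 : t^2 * rexp (-c*t^2) ≤ c⁻¹ := sq_mul_gauss_le' hc
  have h3 : t ≤ 1 + t^2 := by nlinarith [sq_nonneg (t-1)]
  have he : rexp (-c*t^2) ≤ 1 := by
    rw [Real.exp_le_one_iff]
    nlinarith
  calc rexp (-c*t^2) * t ≤ rexp (-c*t^2) * (1 + t^2) :=
        mul_le_mul_of_nonneg_left h3 (exp_pos _).le
    _ = rexp (-c*t^2) + t^2 * rexp (-c*t^2) := by ring
    _ ≤ 1 + c⁻¹ := add_le_add he h2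

end Aux

section KL
open Real
variable {d : ℕ}

lemma gauss_int_one {s : ℝ} (hs : 0 < s) :
    ∫ y : EuclideanSpace ℝ (Fin d),
      (2*π*s^2)^(-(d:ℝ)/2) * rexp (-‖y‖^2/(2*s^2)) = 1 := by
  have hb : 0 < (2*s^2)⁻¹ := by positivity
  have h1 : ∀ y : EuclideanSpace ℝ (Fin d),
      rexp (-‖y‖^2/(2*s^2)) = rexp (-(2*s^2)⁻¹ * ‖y‖^2) := by
    intro y; congr 1; field_simp
  simp_rw [h1]
  rw [integral_const_mul, GaussianFourier.integral_rexp_neg_mul_sq_norm hb,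
    finrank_euclideanSpace_fin]
  have h2 : π / (2*s^2)⁻¹ = 2*π*s^2 := by field_simp
  rw [h2, ← Real.rpow_add (by positivity)]
  rw [neg_div, neg_add_cancel, Real.rpow_zero]

lemma gauss_inner_int_zero {b C : ℝ} (w : EuclideanSpace ℝ (Fin d)) :
    ∫ y : EuclideanSpace ℝ (Fin d),
      (C * rexp (-b*‖y‖^2)) * (inner ℝ y w : ℝ) = 0 := by
  have h := integral_neg_eq_self
    (fun y : EuclideanSpace ℝ (Fin d) => (C * rexp (-b*‖y‖^2)) * (inner ℝ y w : ℝ)) volume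
  simp only [norm_neg, inner_neg_left, mul_neg, integral_neg] at h
  linarith

lemma kl_inner {s : ℝ} (hs : 0 < s) (μ ν : EuclideanSpace ℝ (Fin d)) :
    ∫ x0, isoGauss d s x0 μ * Real.log (isoGauss d s x0 μ / isoGauss d s x0 ν)
      = (1/(2*s^2)) * ‖μ - ν‖^2 := by
  set C : ℝ := (2 * π * s ^ 2) ^ (-(d : ℝ) / 2) with hCdef
  have hC : 0 < C := by
    apply Real.rpow_pos_of_pos; positivity
  set w : EuclideanSpace ℝ (Fin d) := μ - ν with hw
  have hlog : ∀ x0, isoGauss d s x0 μ * Real.log (isoGauss d s x0 μ / isoGauss d s x0 ν)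
      = isoGauss d s x0 μ * ((‖x0-ν‖^2 - ‖x0-μ‖^2)/(2*s^2)) := by
    intro x0
    congr 1
    unfold isoGauss
    rw [mul_div_mul_left _ _ (ne_of_gt hC), ← Real.exp_sub, Real.log_exp]
    ring
  simp_rw [hlog]
  have hsub : (fun x0 => isoGauss d s x0 μ * ((‖x0-ν‖^2 - ‖x0-μ‖^2)/(2*s^2)))
      = (fun y => (C * rexp (-(2*s^2)⁻¹*‖y‖^2)) * ((2*(inner ℝ y w : ℝ) + ‖w‖^2)/(2*s^2))) ∘
        (fun x0 => x0 - μ) := by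
    funext x0
    have h1 : x0 - ν = (x0 - μ) + w := by rw [hw]; abel
    simp only [Function.comp_apply]
    rw [h1, norm_add_sq_real]
    unfold isoGauss
    rw [← hCdef]
    congr 1
    · congr 1
      rw [neg_div]
      congr 1
      field_simp
    · ring
  rw [hsub]
  refine (integral_sub_right_eq_self
    (fun y => (C * rexp (-(2*s^2)⁻¹*‖y‖^2)) * ((2*(inner ℝ y w : ℝ) + ‖w‖^2)/(2*s^2))) μ).trans ?_
  have hb : (0:ℝ) < (2*s^2)⁻¹ := by positivity
  have hint1 : Integrable (fun y : EuclideanSpace ℝ (Fin d) =>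
      (C * rexp (-(2*s^2)⁻¹*‖y‖^2)) * (inner ℝ y w : ℝ)) := by
    refine Integrable.mono' (((integrable_norm_gauss (E := EuclideanSpace ℝ (Fin d)) hb).const_mul
      (C * ‖w‖))) ?_ ?_
    · exact ((continuous_const.mul (by fun_prop)).mul
        (continuous_id.inner continuous_const)).aestronglyMeasurable
    · filter_upwards with y
      rw [norm_mul]
      calc ‖C * rexp (-(2*s^2)⁻¹*‖y‖^2)‖ * ‖(inner ℝ y w : ℝ)‖
          ≤ (C * rexp (-(2*s^2)⁻¹*‖y‖^2)) * (‖y‖ * ‖w‖) := by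
            apply mul_le_mul
            · rw [Real.norm_of_nonneg (by positivity)]
            · exact norm_inner_le_norm _ _
            · exact norm_nonneg _
            · positivity
        _ = C * ‖w‖ * (‖y‖ * rexp (-(2*s^2)⁻¹*‖y‖^2)) := by ring
  have hint2 : Integrable (fun y : EuclideanSpace ℝ (Fin d) =>
      C * rexp (-(2*s^2)⁻¹*‖y‖^2)) :=
    (integrable_gauss' hb).const_mul C
  have hsplit : (fun y : EuclideanSpace ℝ (Fin d) =>
      (C * rexp (-(2*s^2)⁻¹*‖y‖^2)) * ((2*(inner ℝ y w : ℝ) + ‖w‖^2)/(2*s^2)))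
      = (fun y => (s^2)⁻¹ * ((C * rexp (-(2*s^2)⁻¹*‖y‖^2)) * (inner ℝ y w : ℝ))
          + (‖w‖^2/(2*s^2)) * (C * rexp (-(2*s^2)⁻¹*‖y‖^2))) := by
    funext y
    field_simp
  rw [hsplit, integral_add ((hint1.const_mul _)) ((hint2.const_mul _)),
    integral_const_mul, integral_const_mul, gauss_inner_int_zero]
  have hone : ∫ y : EuclideanSpace ℝ (Fin d), C * rexp (-(2*s^2)⁻¹*‖y‖^2) = 1 := by
    have := gauss_int_one (d := d) hs
    refine Eq.trans ?_ this
    congr 1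
    funext y
    rw [← hCdef]
    congr 1
    congr 1
    field_simp
  rw [hone]
  ring

end KL

section Der
open Real

lemma hasFDerivAt_gaussKernel {d : ℕ} {α σ : ℝ}
    (a x : EuclideanSpace ℝ (Fin d)) :
    HasFDerivAt (fun y => gaussKernel d α σ a y)
      ((-(σ^2)⁻¹ * gaussKernel d α σ a x) • innerSL ℝ (x - α • a)) x := by
  have h1 : HasFDerivAt (fun y : EuclideanSpace ℝ (Fin d) => y - α • a)
      (ContinuousLinearMap.id ℝ _) x := (hasFDerivAt_id x).sub_const _
  have h2 := h1.norm_sq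
  have h3 : HasFDerivAt (fun y : EuclideanSpace ℝ (Fin d) => -‖y - α • a‖^2/(2*σ^2))
      ((-(2*σ^2)⁻¹) • (2 • (innerSL ℝ (x - α • a)).comp (ContinuousLinearMap.id ℝ _))) x := by
    have h := h2.const_mul (-(2*σ^2)⁻¹)
    have heq2 : (fun y : EuclideanSpace ℝ (Fin d) => -(2*σ^2)⁻¹ * ‖y - α • a‖^2)
        = (fun y => -‖y - α • a‖^2/(2*σ^2)) := by
      funext y; field_simp
    rwa [heq2] at h
  have h4 := h3.exp
  have h5 := h4.const_mul ((2 * Real.pi * σ ^ 2) ^ (-(d : ℝ) / 2))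
  have heq : (fun y : EuclideanSpace ℝ (Fin d) =>
      (2 * Real.pi * σ ^ 2) ^ (-(d : ℝ) / 2) * rexp (-‖y - α • a‖^2/(2*σ^2)))
      = fun y => gaussKernel d α σ a y := by
    funext y; rfl
  rw [heq] at h5
  refine h5.congr_fderiv ?_
  ext u
  simp only [ContinuousLinearMap.coe_smul', Pi.smul_apply, innerSL_apply_apply,
    ContinuousLinearMap.smul_apply, ContinuousLinearMap.coe_comp', Function.comp_apply,
    ContinuousLinearMap.coe_id', id_eq, smul_eq_mul, gaussKernel]
  ring

end Der

set_option maxHeartbeats 2000000 in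
set_option synthInstance.maxHeartbeats 1000000 in
/-- Let `X₀` have density `q₀` on `ℝ^d` with finite second moment, `ε ~ N(0, I_d)` independent
of `X₀`, `X_t = α X₀ + σ ε` with `α, σ > 0`, and `q_t` the density of `X_t`.  Let
`g : ℝ^d → ℝ^m` be measurable and `φ : ℝ^d → ℝ^d` measurable with `E‖φ(X_t)‖² < ∞`.
Suppose the conditional density of `X₀` given `X_t = x` is modeled as
`q(· | x) = N( E[X₀ | X_t = x], s² I_d )` and the network's conditional is
`p(· | g(x)) = N( (x − σ φ(x))/α, s² I_d )` for a fixed `s > 0`.  Then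

`E_{X_t}[ D_KL( q(· | X_t) ‖ p(· | g(X_t)) ) ]
  = (1/(2s²)) · E‖ E[X₀ | X_t] − (X_t − σ φ(X_t))/α ‖²
  = ( σ² / (2 s² α²) ) · E‖ φ(X_t) + σ ∇ log q_t(X_t) ‖²`. -/
theorem expected_KL_gaussian_eq_score_loss
    {d m : ℕ} (α σ s : ℝ) (hα : 0 < α) (hσ : 0 < σ) (hs : 0 < s)
    (q0 : EuclideanSpace ℝ (Fin d) → ℝ)
    (hq0meas : Measurable q0)
    (hq0pos : ∀ x, 0 < q0 x)
    (hq0prob : ∫ x, q0 x = 1)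
    -- finite second moment:
    (hq0mom : Integrable (fun x => ‖x‖ ^ 2 * q0 x))
    (qt : EuclideanSpace ℝ (Fin d) → ℝ)
    (hqt : ∀ x, qt x = ∫ x0, gaussKernel d α σ x0 x * q0 x0)
    (φ : EuclideanSpace ℝ (Fin d) → EuclideanSpace ℝ (Fin d))
    (hφmeas : Measurable φ)
    -- E‖φ(X_t)‖² < ∞:
    (hφsq : Integrable (fun x => qt x * ‖φ x‖ ^ 2))
    (g : EuclideanSpace ℝ (Fin d) → (Fin m → ℝ)) (hg : Measurable g)
    -- the network's conditional family, indexed by ζ and evaluated at ζ = g(x):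
    (pfam : (Fin m → ℝ) → EuclideanSpace ℝ (Fin d) → ℝ)
    (hpfam : ∀ x x0, pfam (g x) x0 = isoGauss d s x0 (α⁻¹ • (x - σ • φ x))) :
    -- E_{X_t}[ D_KL( q(· | X_t) ‖ p(· | g(X_t)) ) ]
    ((∫ x, qt x * ∫ x0,
        isoGauss d s x0 (postMean d α σ q0 qt x) *
          Real.log (isoGauss d s x0 (postMean d α σ q0 qt x) / pfam (g x) x0))
      = (1 / (2 * s ^ 2)) *
          ∫ x, qt x * ‖postMean d α σ q0 qt x - α⁻¹ • (x - σ • φ x)‖ ^ 2)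
    ∧ ((1 / (2 * s ^ 2)) *
          (∫ x, qt x * ‖postMean d α σ q0 qt x - α⁻¹ • (x - σ • φ x)‖ ^ 2)
        = (σ ^ 2 / (2 * s ^ 2 * α ^ 2)) *
            ∫ x, qt x * ‖φ x + σ • gradient (fun y => Real.log (qt y)) x‖ ^ 2) := by
  classical
  -- integrability of q0
  have hq0int : Integrable q0 := by
    by_contra h
    rw [integral_undef h] at hq0prob
    exact one_ne_zero hq0prob.symm
  have hq0n1 : Integrable (fun a : EuclideanSpace ℝ (Fin d) => ‖a‖ * q0 a) := by
    refine Integrable.mono' (hq0int.add hq0mom)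
      ((measurable_norm.mul hq0meas).aestronglyMeasurable) ?_
    filter_upwards with a
    have h0 := (hq0pos a).le
    rw [Real.norm_of_nonneg (by positivity)]
    simp only [Pi.add_apply]
    nlinarith [mul_nonneg (sq_nonneg (‖a‖ - 1)) h0, norm_nonneg a]
  set C1 : ℝ := (2 * Real.pi * σ ^ 2) ^ (-(d : ℝ) / 2) with hC1def
  have hC1 : 0 < C1 := Real.rpow_pos_of_pos (by positivity) _
  have hKpos : ∀ a x : EuclideanSpace ℝ (Fin d), 0 < gaussKernel d α σ a x := by
    intro a x
    unfold gaussKernel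
    positivity
  have hKleC : ∀ a x : EuclideanSpace ℝ (Fin d), gaussKernel d α σ a x ≤ C1 := by
    intro a x
    unfold gaussKernel
    rw [← hC1def]
    calc C1 * Real.exp (-‖x - α • a‖ ^ 2 / (2 * σ ^ 2)) ≤ C1 * 1 := by
          apply mul_le_mul_of_nonneg_left _ hC1.le
          rw [Real.exp_le_one_iff]
          apply div_nonpos_of_nonpos_of_nonneg
          · simp [sq_nonneg]
          · positivity
      _ = C1 := mul_one _
  have hKmul : ∀ a x : EuclideanSpace ℝ (Fin d),
      gaussKernel d α σ a x * ‖x - α • a‖ ≤ C1 * (1 + 2*σ^2) := by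
    intro a x
    unfold gaussKernel
    rw [← hC1def]
    have hc : (0:ℝ) < (2*σ^2)⁻¹ := by positivity
    have hrw : Real.exp (-‖x - α • a‖^2/(2*σ^2))
        = Real.exp (-(2*σ^2)⁻¹ * ‖x - α • a‖^2) := by congr 1; field_simp
    calc C1 * Real.exp (-‖x - α • a‖ ^ 2 / (2 * σ ^ 2)) * ‖x - α • a‖
        = C1 * (Real.exp (-(2*σ^2)⁻¹ * ‖x - α • a‖^2) * ‖x - α • a‖) := by
          rw [← hrw]; ring
      _ ≤ C1 * (1 + 2*σ^2) := by
          apply mul_le_mul_of_nonneg_left _ hC1.le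
          have h := gauss_mul_norm_le hc (norm_nonneg (x - α • a))
          rwa [inv_inv] at h
  have hKcont : ∀ x, Continuous fun a : EuclideanSpace ℝ (Fin d) => gaussKernel d α σ a x := by
    intro x
    unfold gaussKernel
    fun_prop
  have hKq0meas : ∀ x, AEStronglyMeasurable
      (fun a => gaussKernel d α σ a x * q0 a) volume :=
    fun x => ((hKcont x).measurable.mul hq0meas).aestronglyMeasurable
  have hKq0int : ∀ x, Integrable (fun a => gaussKernel d α σ a x * q0 a) := by
    intro x
    refine Integrable.mono' (hq0int.const_mul C1) (hKq0meas x) ?_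
    filter_upwards with a
    rw [Real.norm_of_nonneg (mul_nonneg (hKpos a x).le (hq0pos a).le)]
    exact mul_le_mul_of_nonneg_right (hKleC a x) (hq0pos a).le
  have hqt_pos : ∀ x, 0 < qt x := by
    intro x
    rw [hqt x]
    refine (integral_pos_iff_support_of_nonneg
      (fun a => mul_nonneg (hKpos a x).le (hq0pos a).le) (hKq0int x)).mpr ?_
    have hsupp : Function.support (fun a => gaussKernel d α σ a x * q0 a) = Set.univ := by
      ext a
      simp only [Function.mem_support, Set.mem_univ, iff_true]
      exact (mul_pos (hKpos a x) (hq0pos a)).ne'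
    rw [hsupp]
    exact isOpen_univ.measure_pos volume ⟨0, trivial⟩
  have hMint : ∀ x, Integrable
      (fun a : EuclideanSpace ℝ (Fin d) => (gaussKernel d α σ a x * q0 a) • a) := by
    intro x
    refine Integrable.mono' (hq0n1.const_mul C1) ?_ ?_
    · exact (hKq0meas x).smul aestronglyMeasurable_id
    · filter_upwards with a
      rw [norm_smul, Real.norm_of_nonneg (mul_nonneg (hKpos a x).le (hq0pos a).le)]
      calc gaussKernel d α σ a x * q0 a * ‖a‖ ≤ C1 * q0 a * ‖a‖ := by
            apply mul_le_mul_of_nonneg_right _ (norm_nonneg a)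
            exact mul_le_mul_of_nonneg_right (hKleC a x) (hq0pos a).le
        _ = C1 * (‖a‖ * q0 a) := by ring
  set M : EuclideanSpace ℝ (Fin d) → EuclideanSpace ℝ (Fin d) :=
    fun x => ∫ a, (gaussKernel d α σ a x * q0 a) • a with hMdef
  have hpostM : ∀ x, postMean d α σ q0 qt x = (qt x)⁻¹ • M x := by
    intro x
    unfold postMean
    rw [hMdef, ← integral_smul]
    congr 1
    funext a
    rw [div_eq_mul_inv, mul_comm, mul_smul]
  have hqt_deriv : ∀ x, HasFDerivAt qt (innerSL ℝ ((σ^2)⁻¹ • (α • M x - qt x • x))) x := by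
    intro x₀
    have hmain : HasFDerivAt (fun x => ∫ a, gaussKernel d α σ a x * q0 a)
        (∫ a, (-(σ^2)⁻¹ * (gaussKernel d α σ a x₀ * q0 a)) • innerSL ℝ (x₀ - α • a)) x₀ := by
      refine hasFDerivAt_integral_of_dominated_of_fderiv_le (s := Metric.ball x₀ 1)
        (F' := fun x a => (-(σ^2)⁻¹ * (gaussKernel d α σ a x * q0 a)) • innerSL ℝ (x - α • a))
        (bound := fun a => (σ^2)⁻¹ * (C1 * (1 + 2*σ^2)) * q0 a) (Metric.ball_mem_nhds x₀ one_pos) ?_ ?_ ?_ ?_ ?_ ?_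
      · filter_upwards with x using hKq0meas x
      · exact hKq0int x₀
      · refine AEStronglyMeasurable.smul (𝕜 := ℝ) ?_ ?_
        · exact (((hKcont x₀).measurable.mul hq0meas).const_mul (-(σ^2)⁻¹)).aestronglyMeasurable
        · exact ((innerSL ℝ).continuous.comp
            (by fun_prop : Continuous fun a : EuclideanSpace ℝ (Fin d) => x₀ - α • a)).aestronglyMeasurable
      · filter_upwards with a
        intro x _
        have hnb := norm_smul (-(σ^2)⁻¹ * (gaussKernel d α σ a x * q0 a))
          ((innerSL ℝ) (x - α • a))
        rw [hnb, innerSL_apply_norm]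
        have h1 : ‖-(σ^2)⁻¹ * (gaussKernel d α σ a x * q0 a)‖
            = (σ^2)⁻¹ * (gaussKernel d α σ a x * q0 a) := by
          rw [norm_mul, norm_neg, Real.norm_of_nonneg (inv_nonneg.mpr (sq_nonneg σ)),
            Real.norm_of_nonneg (mul_nonneg (hKpos a x).le (hq0pos a).le)]
        rw [h1]
        calc (σ^2)⁻¹ * (gaussKernel d α σ a x * q0 a) * ‖x - α • a‖
            = (σ^2)⁻¹ * q0 a * (gaussKernel d α σ a x * ‖x - α • a‖) := by ring
          _ ≤ (σ^2)⁻¹ * q0 a * (C1 * (1 + 2*σ^2)) := by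
              apply mul_le_mul_of_nonneg_left (hKmul a x) (by have := (hq0pos a).le; positivity)
          _ = (σ^2)⁻¹ * (C1 * (1 + 2*σ^2)) * q0 a := by ring
      · exact hq0int.const_mul _
      · filter_upwards with a
        intro x _
        have h := (hasFDerivAt_gaussKernel (α := α) (σ := σ) a x).mul_const (q0 a)
        refine h.congr_fderiv ?_
        ext u
        simp only [ContinuousLinearMap.coe_smul', Pi.smul_apply, innerSL_apply_apply,
          ContinuousLinearMap.smul_apply, smul_eq_mul]
        ring
    have hqfun : (fun x => ∫ a, gaussKernel d α σ a x * q0 a) = qt := by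
      funext x
      exact (hqt x).symm
    rw [hqfun] at hmain
    have hint_h : Integrable (fun a =>
        (-(σ^2)⁻¹ * (gaussKernel d α σ a x₀ * q0 a)) • (x₀ - α • a)) := by
      refine Integrable.mono' (hq0int.const_mul ((σ^2)⁻¹ * (C1 * (1 + 2*σ^2)))) ?_ ?_
      · exact ((((hKcont x₀).measurable.mul hq0meas).const_mul
          (-(σ^2)⁻¹)).aestronglyMeasurable).smul
          (Continuous.aestronglyMeasurable (by fun_prop))
      · filter_upwards with a
        have hnb := norm_smul (-(σ^2)⁻¹ * (gaussKernel d α σ a x₀ * q0 a)) (x₀ - α • a)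
        rw [hnb]
        have h1 : ‖-(σ^2)⁻¹ * (gaussKernel d α σ a x₀ * q0 a)‖
            = (σ^2)⁻¹ * (gaussKernel d α σ a x₀ * q0 a) := by
          rw [norm_mul, norm_neg, Real.norm_of_nonneg (inv_nonneg.mpr (sq_nonneg σ)),
            Real.norm_of_nonneg (mul_nonneg (hKpos a x₀).le (hq0pos a).le)]
        rw [h1]
        calc (σ^2)⁻¹ * (gaussKernel d α σ a x₀ * q0 a) * ‖x₀ - α • a‖
            = (σ^2)⁻¹ * q0 a * (gaussKernel d α σ a x₀ * ‖x₀ - α • a‖) := by ring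
          _ ≤ (σ^2)⁻¹ * q0 a * (C1 * (1 + 2*σ^2)) := by
              apply mul_le_mul_of_nonneg_left (hKmul a x₀) (by have := (hq0pos a).le; positivity)
          _ = (σ^2)⁻¹ * (C1 * (1 + 2*σ^2)) * q0 a := by ring
    have hrw : (fun a => (-(σ^2)⁻¹ * (gaussKernel d α σ a x₀ * q0 a)) • innerSL ℝ (x₀ - α • a))
        = fun a => innerSL ℝ ((-(σ^2)⁻¹ * (gaussKernel d α σ a x₀ * q0 a)) • (x₀ - α • a)) := by
      funext a
      exact ((innerSL ℝ).map_smul _ _).symm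
    rw [hrw, ContinuousLinearMap.integral_comp_comm _ hint_h] at hmain
    have hfin : (∫ a, (-(σ^2)⁻¹ * (gaussKernel d α σ a x₀ * q0 a)) • (x₀ - α • a))
        = (σ^2)⁻¹ • (α • M x₀ - qt x₀ • x₀) := by
      have hsplit : (fun a => (-(σ^2)⁻¹ * (gaussKernel d α σ a x₀ * q0 a)) • (x₀ - α • a))
          = fun a => (σ^2)⁻¹ • (α • ((gaussKernel d α σ a x₀ * q0 a) • a)
              - (gaussKernel d α σ a x₀ * q0 a) • x₀) := by
        funext a
        match_scalars <;> ring
      rw [hsplit, integral_smul]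
      congr 1
      have i1 : Integrable (fun a : EuclideanSpace ℝ (Fin d) =>
          α • ((gaussKernel d α σ a x₀ * q0 a) • a)) volume := (hMint x₀).smul α
      have i2 : Integrable (fun a : EuclideanSpace ℝ (Fin d) =>
          (gaussKernel d α σ a x₀ * q0 a) • x₀) volume := (hKq0int x₀).smul_const x₀
      rw [integral_sub i1 i2, integral_smul, integral_smul_const]
      rw [hMdef, hqt x₀]
    rw [hfin] at hmain
    exact hmain
  have hgrad : ∀ x, gradient (fun y => Real.log (qt y)) x
      = (σ^2)⁻¹ • (α • postMean d α σ q0 qt x - x) := by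
    intro x
    have h2 := (Real.hasDerivAt_log (hqt_pos x).ne').comp_hasFDerivAt x (hqt_deriv x)
    have h3 : HasGradientAt (fun y => Real.log (qt y))
        ((σ^2)⁻¹ • (α • postMean d α σ q0 qt x - x)) x := by
      have hveq : (σ^2)⁻¹ • (α • postMean d α σ q0 qt x - x)
          = (qt x)⁻¹ • ((σ^2)⁻¹ • (α • M x - qt x • x)) := by
        rw [hpostM x]
        have hq : qt x ≠ 0 := (hqt_pos x).ne'
        match_scalars <;> field_simp
        all_goals (try exact Or.inl (by ring))
        all_goals ring
      have htd : ∀ (c : ℝ) (v : EuclideanSpace ℝ (Fin d)),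
          InnerProductSpace.toDual ℝ (EuclideanSpace ℝ (Fin d)) (c • v)
            = c • innerSL ℝ v := by
        intro c v
        ext u
        simp only [InnerProductSpace.toDual_apply_apply, ContinuousLinearMap.smul_apply,
          innerSL_apply_apply, smul_eq_mul, real_inner_smul_left]
      rw [hasGradientAt_iff_hasFDerivAt, hveq, htd]
      exact h2
    exact h3.gradient
  constructor
  · have h1 : ∀ x, (∫ x0, isoGauss d s x0 (postMean d α σ q0 qt x) *
        Real.log (isoGauss d s x0 (postMean d α σ q0 qt x) / pfam (g x) x0))
        = (1/(2*s^2)) * ‖postMean d α σ q0 qt x - α⁻¹ • (x - σ • φ x)‖^2 := by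
      intro x
      have hk := kl_inner hs (postMean d α σ q0 qt x) (α⁻¹ • (x - σ • φ x))
      simp_rw [hpfam x]
      exact hk
    calc (∫ x, qt x * ∫ x0, isoGauss d s x0 (postMean d α σ q0 qt x) *
            Real.log (isoGauss d s x0 (postMean d α σ q0 qt x) / pfam (g x) x0))
        = ∫ x, (1/(2*s^2)) * (qt x * ‖postMean d α σ q0 qt x - α⁻¹ • (x - σ • φ x)‖^2) := by
          refine integral_congr_ae (Filter.Eventually.of_forall fun x => ?_)
          dsimp only
          rw [h1 x]
          ring
      _ = (1/(2*s^2)) * ∫ x, qt x * ‖postMean d α σ q0 qt x - α⁻¹ • (x - σ • φ x)‖^2 :=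
          integral_const_mul _ _
  · have hvec : ∀ x, qt x * ‖postMean d α σ q0 qt x - α⁻¹ • (x - σ • φ x)‖^2
        = (σ^2/α^2) * (qt x * ‖φ x + σ • gradient (fun y => Real.log (qt y)) x‖^2) := by
      intro x
      rw [hgrad x]
      have hv : postMean d α σ q0 qt x - α⁻¹ • (x - σ • φ x)
          = (σ/α) • (φ x + σ • ((σ^2)⁻¹ • (α • postMean d α σ q0 qt x - x))) := by
        have hσ' : σ ≠ 0 := hσ.ne'
        have hα' : α ≠ 0 := hα.ne'
        match_scalars <;> field_simp
        all_goals (try exact Or.inl (by ring))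
        all_goals ring
      rw [hv, norm_smul, Real.norm_eq_abs, abs_of_pos (div_pos hσ hα), mul_pow, div_pow]
      ring
    calc (1/(2*s^2)) * (∫ x, qt x * ‖postMean d α σ q0 qt x - α⁻¹ • (x - σ • φ x)‖^2)
        = (1/(2*s^2)) * ∫ x, (σ^2/α^2) *
            (qt x * ‖φ x + σ • gradient (fun y => Real.log (qt y)) x‖^2) := by
          rw [integral_congr_ae (Filter.Eventually.of_forall hvec)]
      _ = (σ^2/(2*s^2*α^2)) *
            ∫ x, qt x * ‖φ x + σ • gradient (fun y => Real.log (qt y)) x‖^2 := by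
          rw [integral_const_mul]
          ring
end
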